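/- arXiv:2208.06866 — 2 statements merged into one kernel-verified Lean document; each statement's English description precedes it below -/
import Mathlib

section
/- Define Ω(K,C) recursively by Ω(K,1)=2 for all K≥2, and Ω(K,C)=Ω(K,C−1)+Ω(K−1,C−1) for K>2, C>1, with base Ω(2,C)=C²−C+2. Then for all K≥2 and C≥1, Ω(K,C) = binom(C−1,K) + Σ_{k=0}^{K} binom(C,k). -/
open Finset

lemma sum_succ_choose (c : ℕ) : ∀ K, ∑ k ∈ range (K+1), (c+1).choose k
    = ∑ k ∈ range (K+1), c.choose k + ∑ k ∈ range K, c.choose k := by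
  intro K
  induction K with
  | zero => simp
  | succ n ih =>
    rw [sum_range_succ, ih, Nat.choose_succ_succ,
      sum_range_succ (fun k => c.choose k) (n+1), sum_range_succ (fun k => c.choose k) n]
    ring

lemma sum_one_choose : ∀ K, 1 ≤ K → ∑ k ∈ range (K+1), Nat.choose 1 k = 2 := by
  intro K hK
  induction K with
  | zero => omega
  | succ n ih =>
    rcases Nat.eq_or_lt_of_le hK with h | h
    · rw [← h]; decide
    · rw [sum_range_succ, ih (by omega), Nat.choose_eq_zero_of_lt (by omega)]

lemma choose_two_sq : ∀ c : ℕ, c.choose 2 + (c+1).choose 2 = c^2 := by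
  intro c
  induction c with
  | zero => simp
  | succ n ih =>
    have h1 : (n+1).choose 2 = n.choose 1 + n.choose 2 := Nat.choose_succ_succ n 1
    have h2 : (n+1+1).choose 2 = (n+1).choose 1 + (n+1).choose 2 := Nat.choose_succ_succ (n+1) 1
    simp [Nat.choose_one_right] at h1 h2
    have e1 : (n+1)^2 = n^2 + 2*n + 1 := by ring
    omega

theorem omega_closed_form (Ω : ℕ → ℕ → ℕ)
    (h1 : ∀ K, 2 ≤ K → Ω K 1 = 2)
    (h2 : ∀ C, 1 ≤ C → Ω 2 C = C ^ 2 - C + 2)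
    (hrec : ∀ K C, 2 < K → 1 < C → Ω K C = Ω K (C - 1) + Ω (K - 1) (C - 1)) :
    ∀ K C, 2 ≤ K → 1 ≤ C →
      Ω K C = Nat.choose (C - 1) K + ∑ k ∈ Finset.range (K + 1), Nat.choose C k := by
  suffices h : ∀ C, 1 ≤ C → ∀ K, 2 ≤ K →
      Ω K C = Nat.choose (C - 1) K + ∑ k ∈ Finset.range (K + 1), Nat.choose C k by
    intro K C hK hC; exact h C hC K hK
  intro C
  induction C with
  | zero => omega
  | succ c ih =>
    intro _ K hK
    by_cases hc : c = 0
    · subst hc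
      rw [h1 K hK]
      simp only [Nat.add_sub_cancel]
      rw [Nat.choose_eq_zero_of_lt (by omega), sum_one_choose K (by omega)]
    · have hc1 : 1 ≤ c := by omega
      rcases Nat.eq_or_lt_of_le hK with hK2 | hK3
      · -- K = 2
        subst hK2
        rw [h2 (c+1) (by omega)]
        simp only [Nat.add_sub_cancel]
        have hs : ∑ k ∈ range 3, (c+1).choose k = 1 + (c+1) + (c+1).choose 2 := by
          rw [show (3:ℕ) = 2 + 1 from rfl, sum_range_succ, sum_range_succ, sum_range_succ]
          simp [Nat.choose_one_right]
        rw [hs]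
        have h3 := choose_two_sq c
        have e1 : (c+1)^2 = c^2 + 2*c + 1 := by ring
        omega
      · -- K ≥ 3
        obtain ⟨m, rfl⟩ : ∃ m, K = m + 1 := ⟨K - 1, by omega⟩
        have hm : 2 ≤ m := by omega
        rw [hrec (m+1) (c+1) hK3 (by omega)]
        simp only [Nat.add_sub_cancel]
        rw [ih hc1 (m+1) hK, ih hc1 m hm]
        obtain ⟨d, rfl⟩ : ∃ d, c = d + 1 := ⟨c - 1, by omega⟩
        simp only [Nat.add_sub_cancel]
        rw [sum_succ_choose (d+1) (m+1)]
        have hch : d.choose (m+1) + d.choose m = (d+1).choose (m+1) := by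
          simp only [Nat.choose_succ_succ, Nat.succ_eq_add_one]; omega
        omega
end

section
/- If Ω: ℕ × ℕ → ℕ satisfies Ω(K,1) = 2 for all K ≥ 2, Ω(2,C) = C² − C + 2 for all C ≥ 1, and Ω(K,C) = Ω(K,C−1) + Ω(K−1,C−1) for K ≥ 3, C ≥ 2, then Ω(K,C) ≤ 2^C for all K ≥ 2, C ≥ 1, with equality iff C ≤ K + 1. -/
/-! For `K ≥ 3` the recurrence is Pascal's rule, which `2 ^ C = 2 ^ (C - 1) + 2 ^ (C - 1)` also
satisfies. Inducting on `C`, the sum `Ω K (C - 1) + Ω (K - 1) (C - 1)` of two terms bounded by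
`2 ^ (C - 1)` reaches `2 ^ C` exactly when both terms do, i.e. when `C - 1 ≤ K`. The column
`K = 2` is the base of this induction: `C ^ 2 - C + 2` agrees with `2 ^ C` for `C ≤ 3` and falls
below it from `C = 4` on. -/

lemma sq_sub_self_add_two_lt_two_pow {C : ℕ} (hC : 4 ≤ C) : C ^ 2 - C + 2 < 2 ^ C := by
  induction C, hC using Nat.le_induction with
  | base => norm_num
  | succ n hn ih =>
    have hn_le_sq : n ≤ n ^ 2 := Nat.le_self_pow two_ne_zero n
    have h_succ : (n + 1) ^ 2 - (n + 1) + 2 = n ^ 2 + n + 2 := by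
      rw [add_sq]; omega
    have ih' : n ^ 2 + 2 < 2 ^ n + n := by omega
    rw [h_succ, pow_succ 2 n]
    nlinarith

lemma sq_sub_self_add_two_le_two_pow {C : ℕ} (hC : 1 ≤ C) :
    C ^ 2 - C + 2 ≤ 2 ^ C ∧ (C ^ 2 - C + 2 = 2 ^ C ↔ C ≤ 3) := by
  rcases le_or_gt C 3 with hC3 | hC3
  · interval_cases C <;> norm_num
  · have := sq_sub_self_add_two_lt_two_pow hC3
    omega

lemma add_le_two_pow_succ_and_eq_iff {a b n m : ℕ}
    (ha : a ≤ 2 ^ n ∧ (a = 2 ^ n ↔ n ≤ m + 1)) (hb : b ≤ 2 ^ n ∧ (b = 2 ^ n ↔ n ≤ m)) :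
    a + b ≤ 2 ^ (n + 1) ∧ (a + b = 2 ^ (n + 1) ↔ n ≤ m) := by
  obtain ⟨ha_le, ha_eq⟩ := ha
  obtain ⟨hb_le, hb_eq⟩ := hb
  rw [pow_succ]
  refine ⟨by omega, fun h => hb_eq.mp (by omega), fun h => ?_⟩
  have := ha_eq.mpr (by omega)
  have := hb_eq.mpr h
  omega

theorem omega_le_pow_iff (Ω : ℕ → ℕ → ℕ)
    (h1 : ∀ K, 2 ≤ K → Ω K 1 = 2)
    (h2 : ∀ C, 1 ≤ C → Ω 2 C = C ^ 2 - C + 2)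
    (hrec : ∀ K C, 3 ≤ K → 2 ≤ C → Ω K C = Ω K (C - 1) + Ω (K - 1) (C - 1)) :
    ∀ K C, 2 ≤ K → 1 ≤ C →
      Ω K C ≤ 2 ^ C ∧ (Ω K C = 2 ^ C ↔ C ≤ K + 1) := by
  intro K C hK hC
  induction C, hC using Nat.le_induction generalizing K with
  | base =>
    rw [h1 K hK]
    omega
  | succ n hn ih =>
    obtain rfl | hK3 : K = 2 ∨ 3 ≤ K := by omega
    · rw [h2 (n + 1) (by omega)]
      exact sq_sub_self_add_two_le_two_pow (by omega)
    · obtain ⟨k, rfl⟩ : ∃ k, K = k + 1 := ⟨K - 1, by omega⟩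
      rw [hrec (k + 1) (n + 1) hK3 (by omega), Nat.add_sub_cancel, Nat.add_sub_cancel,
        Nat.add_le_add_iff_right]
      exact add_le_two_pow_succ_and_eq_iff (ih (k + 1) hK) (ih k (by omega))
end
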